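/- Let P(s) = \sum_{k=1}^m a_k k^{-s} with a_1 \neq 0, let r \in \mathbb{R}, \kappa_r(x) = \sum_{k \le x} a_k k^{-(r-1/2)}, and d_{n,r}^2 = \inf_{b_1,\ldots,b_n \in \mathbb{C}} \int_0^\infty |\mathbf{1}_{(0,1)}(x) - \sum_{k=1}^n b_k \kappa_r(1/(kx))|^2 dx. If \lim_{n \to \infty} d_{n,r} = 0, then P(s) \neq 0 for all s with \Re(s) > r. -/

import Mathlib

/-!
Suppose `P(s) = 0` with `Re s > r`. Put `w = s - r + 1/2`, so `Re w > 1/2` and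
`ψ(x) = x^(w-1) 𝟙_(0,1](x)` lies in `L²(0,∞)`. For `K ≥ 1` the function `x ↦ κ_r(1/(Kx))` is a
step function, a combination of the indicators of `(0, 1/(jK)]`, `j ≤ m`, and pairing it with `ψ`
gives `K^(-w) P(s) / w = 0`, whereas `𝟙_(0,1)` pairs with `ψ` to `1/w`. By Cauchy–Schwarz every
element of the span of the `κ_r(1/(kx))` is therefore at distance at least `|1/w| / ‖ψ‖₂` from
`𝟙_(0,1)`, so `d_{n,r}` stays away from `0`.
-/

open Finset Filter Topology MeasureTheory

/-- `κ_r(x) = ∑_{1 ≤ k ≤ x} a_k k^{-(r-1/2)}` -/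
noncomputable def kappa (a : ℕ → ℂ) (r : ℝ) (x : ℝ) : ℂ :=
  ∑ k ∈ Finset.Icc 1 ⌊x⌋₊, a k / (k : ℂ) ^ ((r : ℂ) - 1/2)

/-- The square of the Báez-Duarte distance `d_{n,r}`: the squared `L²(0,∞)` distance from the
indicator of `(0,1)` to the span of `x ↦ κ_r(1/(kx))`, `k = 1, …, n`. -/
noncomputable def baezDuarteDistSq (a : ℕ → ℂ) (r : ℝ) (n : ℕ) : ℝ :=
  ⨅ b : Fin n → ℂ, ∫ x in Set.Ioi (0 : ℝ),
    ‖Set.indicator (Set.Ioo (0 : ℝ) 1) (fun _ => (1 : ℂ)) x -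
      ∑ k : Fin n, b k * kappa a r (1 / (((k : ℕ) + 1 : ℕ) * x))‖ ^ 2

section CauchySchwarz

variable {α 𝕜 : Type*} [MeasurableSpace α] {μ : Measure α} [RCLike 𝕜]

theorem norm_integral_mul_sq_le {f g : α → 𝕜} (hf : MemLp f 2 μ) (hg : MemLp g 2 μ) :
    ‖∫ x, f x * g x ∂μ‖ ^ 2 ≤ (∫ x, ‖f x‖ ^ 2 ∂μ) * ∫ x, ‖g x‖ ^ 2 ∂μ := by
  have holder := integral_mul_norm_le_Lp_mul_Lq Real.HolderConjugate.two_two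
    (by simpa using hf) (by simpa using hg)
  simp only [Real.rpow_two, ← Real.sqrt_eq_rpow] at holder
  calc ‖∫ x, f x * g x ∂μ‖ ^ 2 ≤ (∫ x, ‖f x‖ * ‖g x‖ ∂μ) ^ 2 := by
        gcongr
        simpa only [norm_mul] using norm_integral_le_integral_norm (fun x => f x * g x)
    _ ≤ (√(∫ x, ‖f x‖ ^ 2 ∂μ) * √(∫ x, ‖g x‖ ^ 2 ∂μ)) ^ 2 := by
        gcongr ?_ ^ 2
    _ = (∫ x, ‖f x‖ ^ 2 ∂μ) * ∫ x, ‖g x‖ ^ 2 ∂μ := by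
        rw [mul_pow, Real.sq_sqrt (integral_nonneg fun x => by positivity),
          Real.sq_sqrt (integral_nonneg fun x => by positivity)]

theorem norm_integral_mul_sq_le_of_orthogonal {ι : Type*} (s : Finset ι) {f ψ : α → 𝕜}
    {g : ι → α → 𝕜} (hf : MemLp f 2 μ) (hψ : MemLp ψ 2 μ) (hg : ∀ i ∈ s, MemLp (g i) 2 μ)
    (horth : ∀ i ∈ s, ∫ x, g i x * ψ x ∂μ = 0) (b : ι → 𝕜) :
    ‖∫ x, f x * ψ x ∂μ‖ ^ 2 ≤
      (∫ x, ‖f x - ∑ i ∈ s, b i * g i x‖ ^ 2 ∂μ) * ∫ x, ‖ψ x‖ ^ 2 ∂μ := by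
  have hfψ : Integrable (fun x => f x * ψ x) μ := hf.integrable_mul hψ
  have hgψ : ∀ i ∈ s, Integrable (fun x => b i * (g i x * ψ x)) μ := fun i hi =>
    ((hg i hi).integrable_mul hψ).const_mul (b i)
  have hspan : MemLp (fun x => ∑ i ∈ s, b i * g i x) 2 μ :=
    memLp_finsetSum s fun i hi => (hg i hi).const_mul (b i)
  have hpair : ∫ x, (f x - ∑ i ∈ s, b i * g i x) * ψ x ∂μ = ∫ x, f x * ψ x ∂μ := by
    simp_rw [sub_mul, Finset.sum_mul, mul_assoc]
    rw [integral_sub hfψ (integrable_finsetSum s hgψ), integral_finsetSum s hgψ]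
    simp only [integral_const_mul]
    rw [Finset.sum_eq_zero fun i hi => by rw [horth i hi, mul_zero], sub_zero]
  rw [← hpair]
  exact norm_integral_mul_sq_le (hf.sub hspan) hψ

end CauchySchwarz

theorem integrableOn_Ioc_cpow {v : ℂ} (hv : -1 < v.re) {t : ℝ} (ht : 0 ≤ t) :
    IntegrableOn (fun x : ℝ => (x : ℂ) ^ v) (Set.Ioc 0 t) :=
  (intervalIntegrable_iff_integrableOn_Ioc_of_le ht).1
    (intervalIntegral.intervalIntegrable_cpow' hv)

theorem integral_Ioc_cpow_sub_one {w : ℂ} (hw : 0 < w.re) {t : ℝ} (ht : 0 ≤ t) :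
    ∫ x in Set.Ioc 0 t, (x : ℂ) ^ (w - 1) = (t : ℂ) ^ w / w := by
  have hw0 : w ≠ 0 := fun h => by simp [h] at hw
  rw [← intervalIntegral.integral_of_le ht, integral_cpow (Or.inl (by simpa using hw)),
    sub_add_cancel, Complex.ofReal_zero, Complex.zero_cpow hw0, sub_zero]

theorem ofReal_one_div_mul_cpow {x y : ℝ} (hx : 0 < x) (hy : 0 < y) (w : ℂ) :
    ((1 / (x * y) : ℝ) : ℂ) ^ w = (x : ℂ) ^ (-w) * (y : ℂ) ^ (-w) := by
  have harg : ((x * y : ℝ) : ℂ).arg ≠ Real.pi := by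
    rw [Complex.arg_ofReal_of_nonneg (by positivity)]
    exact Real.pi_ne_zero.symm
  rw [one_div, Complex.ofReal_inv, Complex.inv_cpow _ _ harg,
    Complex.ofReal_mul, Complex.mul_cpow_ofReal_nonneg hx.le hy.le,
    Complex.cpow_neg, Complex.cpow_neg, mul_inv]

theorem le_one_div_mul_iff {j K x : ℝ} (hj : 0 < j) (hK : 0 < K) :
    j ≤ 1 / (K * x) ↔ x ∈ Set.Ioc 0 (1 / (j * K)) := by
  rcases le_or_gt x 0 with hx | hx
  · have : 1 / (K * x) ≤ 0 := div_nonpos_of_nonneg_of_nonpos zero_le_one (by nlinarith)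
    simp only [Set.mem_Ioc, not_lt.2 hx, false_and, iff_false, not_le]
    linarith
  · rw [Set.mem_Ioc, le_div_iff₀ (by positivity), le_div_iff₀ (by positivity)]
    constructor
    · exact fun h => ⟨hx, by linarith⟩
    · exact fun h => by linarith [h.2]

namespace BaezDuarte

theorem kappa_eq_sum_ite {a : ℕ → ℂ} {m : ℕ} (ha : ∀ k, m < k → a k = 0) (r y : ℝ) :
    kappa a r y =
      ∑ j ∈ Finset.Icc 1 m, if (j : ℝ) ≤ y then a j / (j : ℂ) ^ ((r : ℂ) - 1 / 2) else 0 := by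
  have hmem : ∀ j : ℕ, j ∈ Finset.Icc 1 ⌊y⌋₊ ↔ 1 ≤ j ∧ (j : ℝ) ≤ y := fun j => by
    rw [Finset.mem_Icc, and_congr_right_iff]
    exact fun hj => Nat.le_floor_iff' (by omega)
  rw [← Finset.sum_filter, kappa]
  refine (Finset.sum_subset (fun j hj => ?_) fun j hj hj_filter => ?_).symm
  · rw [Finset.mem_filter, Finset.mem_Icc] at hj
    exact (hmem j).2 ⟨hj.1.1, hj.2⟩
  · rw [hmem] at hj
    have hjm : m < j := by
      by_contra! h
      exact hj_filter (Finset.mem_filter.2 ⟨Finset.mem_Icc.2 ⟨hj.1, h⟩, hj.2⟩)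
    rw [ha j hjm, zero_div]

theorem kappa_one_div_mul_eq_sum_indicator {a : ℕ → ℂ} {m : ℕ} (ha : ∀ k, m < k → a k = 0)
    (r : ℝ) {K : ℝ} (hK : 0 < K) (x : ℝ) :
    kappa a r (1 / (K * x)) = ∑ j ∈ Finset.Icc 1 m,
      (Set.Ioc 0 (1 / (j * K))).indicator (fun _ => a j / (j : ℂ) ^ ((r : ℂ) - 1 / 2)) x := by
  rw [kappa_eq_sum_ite ha]
  refine Finset.sum_congr rfl fun j hj => ?_
  have hj : (0 : ℝ) < j := by have := (Finset.mem_Icc.1 hj).1; positivity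
  rw [Set.indicator_apply, if_congr (le_one_div_mul_iff hj hK) rfl rfl]

theorem memLp_kappa_one_div_mul {a : ℕ → ℂ} {m : ℕ} (ha : ∀ k, m < k → a k = 0) (r : ℝ)
    {K : ℝ} (hK : 0 < K) : MemLp (fun x => kappa a r (1 / (K * x))) 2 volume := by
  simp_rw [kappa_one_div_mul_eq_sum_indicator ha r hK]
  exact memLp_finsetSum _ fun j _ =>
    memLp_indicator_const 2 measurableSet_Ioc _ (Or.inr measure_Ioc_lt_top.ne)

noncomputable def truncatedPower (w : ℂ) : ℝ → ℂ :=
  (Set.Ioc 0 1).indicator fun x => (x : ℂ) ^ (w - 1)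

theorem memLp_truncatedPower {w : ℂ} (hw : 1 / 2 < w.re) : MemLp (truncatedPower w) 2 volume := by
  have hmeas :
      AEStronglyMeasurable (fun x : ℝ => (x : ℂ) ^ (w - 1)) (volume.restrict (Set.Ioc 0 1)) :=
    (integrableOn_Ioc_cpow (v := w - 1) (by simp; linarith) zero_le_one).aestronglyMeasurable
  rw [truncatedPower, memLp_indicator_iff_restrict measurableSet_Ioc,
    memLp_two_iff_integrable_sq_norm hmeas]
  have hsq : (fun x : ℝ => ‖(x : ℂ) ^ (w - 1)‖ ^ 2) = fun x : ℝ => ‖(x : ℂ) ^ (2 * (w - 1))‖ := by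
    ext x
    rw [← norm_pow, ← Complex.cpow_nat_mul, Nat.cast_ofNat]
  rw [hsq]
  exact (integrableOn_Ioc_cpow (by simp; linarith) zero_le_one).norm

theorem indicator_const_mul_truncatedPower {t : ℝ} (ht : t ≤ 1) (c : ℂ) (w : ℂ) (x : ℝ) :
    (Set.Ioc 0 t).indicator (fun _ => c) x * truncatedPower w x =
      c * (Set.Ioc 0 t).indicator (fun x => (x : ℂ) ^ (w - 1)) x := by
  by_cases hx : x ∈ Set.Ioc 0 t
  · have hx1 : x ∈ Set.Ioc (0 : ℝ) 1 := ⟨hx.1, hx.2.trans ht⟩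
    simp [truncatedPower, hx, hx1]
  · simp [hx]

theorem integrable_indicator_const_mul_truncatedPower {w : ℂ} (hw : 0 < w.re) {t : ℝ}
    (ht0 : 0 ≤ t) (ht1 : t ≤ 1) (c : ℂ) :
    Integrable (fun x => (Set.Ioc 0 t).indicator (fun _ => c) x * truncatedPower w x) := by
  simp_rw [indicator_const_mul_truncatedPower ht1]
  refine Integrable.const_mul ?_ c
  rw [integrable_indicator_iff measurableSet_Ioc]
  exact integrableOn_Ioc_cpow (by simpa using hw) ht0

theorem integral_indicator_const_mul_truncatedPower {w : ℂ} (hw : 0 < w.re) {t : ℝ}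
    (ht0 : 0 ≤ t) (ht1 : t ≤ 1) (c : ℂ) :
    ∫ x in Set.Ioi 0, (Set.Ioc 0 t).indicator (fun _ => c) x * truncatedPower w x =
      c * ((t : ℂ) ^ w / w) := by
  simp_rw [indicator_const_mul_truncatedPower ht1]
  rw [integral_const_mul, integral_indicator measurableSet_Ioc,
    Measure.restrict_restrict measurableSet_Ioc, Set.inter_eq_left.2 Set.Ioc_subset_Ioi_self,
    integral_Ioc_cpow_sub_one hw ht0]

theorem integral_indicator_Ioo_mul_truncatedPower {w : ℂ} (hw : 0 < w.re) :
    ∫ x in Set.Ioi 0, (Set.Ioo 0 1).indicator (fun _ => (1 : ℂ)) x * truncatedPower w x =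
      1 / w := by
  have hIoo : (Set.Ioo (0 : ℝ) 1).indicator (fun _ => (1 : ℂ)) =ᵐ[volume.restrict (Set.Ioi 0)]
      (Set.Ioc 0 1).indicator fun _ => 1 :=
    ae_restrict_of_ae (indicator_ae_eq_of_ae_eq_set Ioo_ae_eq_Ioc)
  rw [integral_congr_ae (by filter_upwards [hIoo] with x hx; rw [hx]),
    integral_indicator_const_mul_truncatedPower hw zero_le_one le_rfl]
  simp

theorem integral_kappa_one_div_mul_mul_truncatedPower {a : ℕ → ℂ} {m : ℕ}
    (ha : ∀ k, m < k → a k = 0) (r : ℝ) {w : ℂ} (hw : 0 < w.re) {K : ℝ} (hK : 1 ≤ K) :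
    ∫ x in Set.Ioi 0, kappa a r (1 / (K * x)) * truncatedPower w x =
      (K : ℂ) ^ (-w) / w * ∑ j ∈ Finset.Icc 1 m, a j * (j : ℂ) ^ (-(w + ((r : ℂ) - 1 / 2))) := by
  have hK0 : 0 < K := by linarith
  have ht : ∀ j ∈ Finset.Icc 1 m, 0 < 1 / ((j : ℝ) * K) ∧ 1 / ((j : ℝ) * K) ≤ 1 := by
    intro j hj
    have hj : (1 : ℝ) ≤ j := by exact_mod_cast (Finset.mem_Icc.1 hj).1
    exact ⟨by positivity, by rw [div_le_one (by positivity)]; nlinarith⟩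
  simp_rw [kappa_one_div_mul_eq_sum_indicator ha r hK0, Finset.sum_mul]
  rw [integral_finsetSum _ fun j hj => (integrable_indicator_const_mul_truncatedPower hw
    (ht j hj).1.le (ht j hj).2 _).restrict, Finset.mul_sum]
  refine Finset.sum_congr rfl fun j hj => ?_
  have hj0 : (0 : ℝ) < j := by have := (Finset.mem_Icc.1 hj).1; positivity
  rw [integral_indicator_const_mul_truncatedPower hw (ht j hj).1.le (ht j hj).2,
    ofReal_one_div_mul_cpow hj0 hK0, Complex.ofReal_natCast, Complex.cpow_neg _ (w + _),
    Complex.cpow_add _ _ (by exact_mod_cast hj0.ne'), Complex.cpow_neg, Complex.cpow_neg]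
  ring

theorem norm_sq_integral_le_baezDuarteDistSq_mul {a : ℕ → ℂ} {m : ℕ}
    (ha : ∀ k, m < k → a k = 0) (r : ℝ) {ψ : ℝ → ℂ}
    (hψ : MemLp ψ 2 (volume.restrict (Set.Ioi 0)))
    (horth : ∀ K : ℕ, 1 ≤ K → ∫ x in Set.Ioi 0, kappa a r (1 / (K * x)) * ψ x = 0) (n : ℕ) :
    ‖∫ x in Set.Ioi 0, (Set.Ioo 0 1).indicator (fun _ => (1 : ℂ)) x * ψ x‖ ^ 2 ≤
      baezDuarteDistSq a r n * ∫ x in Set.Ioi 0, ‖ψ x‖ ^ 2 := by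
  rw [baezDuarteDistSq, Real.iInf_mul_of_nonneg (integral_nonneg fun x => by positivity)]
  exact le_ciInf <| norm_integral_mul_sq_le_of_orthogonal Finset.univ
    ((memLp_indicator_const 2 measurableSet_Ioo _ (Or.inr measure_Ioo_lt_top.ne)).restrict _) hψ
    (fun k _ => (memLp_kappa_one_div_mul ha r (by positivity)).restrict _)
    (fun k _ => horth _ (by omega))

end BaezDuarte

open BaezDuarte in
theorem baezDuarte_dist_tendsto_zero_implies_zero_free_general (m : ℕ) (a : ℕ → ℂ)
    (ha : ∀ k, m < k → a k = 0) (r : ℝ)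
    (hd : Tendsto (fun n : ℕ => Real.sqrt (baezDuarteDistSq a r n)) atTop (𝓝 0)) :
    ∀ s : ℂ, r < s.re → (∑ k ∈ Finset.Icc 1 m, a k * (k : ℂ) ^ (-s)) ≠ 0 := by
  intro s hs hP
  set w : ℂ := s - r + 1 / 2 with hw_def
  have hw : 1 / 2 < w.re := by simp [hw_def]; linarith
  have horth (K : ℕ) (hK : 1 ≤ K) :
      ∫ x in Set.Ioi 0, kappa a r (1 / (K * x)) * truncatedPower w x = 0 := by
    rw [integral_kappa_one_div_mul_mul_truncatedPower ha r (by linarith) (by exact_mod_cast hK),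
      show w + ((r : ℂ) - 1 / 2) = s by ring, hP, mul_zero]
  have hbound := norm_sq_integral_le_baezDuarteDistSq_mul ha r
    ((memLp_truncatedPower hw).restrict _) horth
  simp only [integral_indicator_Ioo_mul_truncatedPower (by linarith : 0 < w.re)] at hbound
  set C := ∫ x in Set.Ioi 0, ‖truncatedPower w x‖ ^ 2
  have hC : 0 ≤ C := integral_nonneg fun x => by positivity
  have hle : ‖1 / w‖ ≤ 0 := ge_of_tendsto' (by simpa using hd.mul_const √C) fun n => by
    rw [← Real.sqrt_sq (norm_nonneg _), ← Real.sqrt_mul' _ hC]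
    exact Real.sqrt_le_sqrt (hbound n)
  have hw0 : w ≠ 0 := fun h => by rw [h, Complex.zero_re] at hw; norm_num at hw
  exact (norm_pos_iff.2 (one_div_ne_zero hw0)).not_ge hle

theorem baezDuarte_dist_tendsto_zero_implies_zero_free (m : ℕ) (hm : 1 ≤ m) (a : ℕ → ℂ)
    (ha1 : a 1 ≠ 0) (ha : ∀ k, m < k → a k = 0) (r : ℝ)
    (hd : Tendsto (fun n : ℕ => Real.sqrt (baezDuarteDistSq a r n)) atTop (𝓝 0)) :
    ∀ s : ℂ, r < s.re → (∑ k ∈ Finset.Icc 1 m, a k * (k : ℂ) ^ (-s)) ≠ 0 :=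
  baezDuarte_dist_tendsto_zero_implies_zero_free_general m a ha r hd
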